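/- arXiv:2205.13819 — 3 statements merged into one kernel-verified Lean document; each statement's English description precedes it below -/
import Mathlib

section
/- Let N be a left strongly regular zero-symmetric unital right near-ring and a ∈ N. Then a² is a regular element of N, i.e., there exists y ∈ N with a² = a²·y·a² (in fact, if a = x·a² then a² = a²·x²·a²). -/
/-- A zero-symmetric unital right near-ring: an additive group (not necessarily
abelian) and a multiplicative monoid with `1 ≠ 0`, satisfying the right
distributive law, and zero-symmetric (`x * 0 = 0`). -/
class ZSNearRing (N : Type*) extends AddGroup N, Monoid N where
  right_distrib : ∀ x y z : N, (x + y) * z = x * z + y * z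
  mul_zero : ∀ x : N, x * 0 = 0
  one_ne_zero : (1 : N) ≠ (0 : N)

namespace ZSNearRing

variable {N : Type*} [ZSNearRing N]

/-- The set `Na = {n·a : n ∈ N}`. -/
def NSet (a : N) : Set N := {x | ∃ n : N, x = n * a}

/-- The left annihilator `(0 :ₗ a) = {x ∈ N : x·a = 0}`. -/
def lAnn (a : N) : Set N := {x | x * a = 0}

/-- `a` is left morphic if there is `b` with `Na = (0 :ₗ b)` and `Nb = (0 :ₗ a)`. -/
def IsLeftMorphic (a : N) : Prop := ∃ b : N, NSet a = lAnn b ∧ NSet b = lAnn a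

end ZSNearRing

open ZSNearRing

/-! In a left strongly regular near-ring, `b² = 0` forces `b = 0`, and a reduced near-ring has
`d·a = 0 → a·d = 0`. So if `a = x·a²`, the element `d = a·x·a - a` satisfies `d·a = 0`, hence
`a·d = 0` and `d² = 0`, i.e. `a·x·a = a`; then `a²·x²·a² = a·(a·x·a) = a²`. -/

namespace ZSNearRing

def IsLeftStronglyRegular (N : Type*) [ZSNearRing N] : Prop :=
  ∀ b : N, ∃ x : N, b = x * (b * b)

def IsReduced (N : Type*) [ZSNearRing N] : Prop :=
  ∀ b : N, b * b = 0 → b = 0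

variable {N : Type*} [ZSNearRing N]

protected theorem zero_mul (z : N) : (0 : N) * z = 0 := by
  have h := right_distrib (0 : N) 0 z
  rw [add_zero] at h
  exact left_eq_add.mp h

protected theorem neg_mul (u z : N) : -u * z = -(u * z) := by
  have h := right_distrib u (-u) z
  rw [add_neg_cancel, ZSNearRing.zero_mul] at h
  exact eq_neg_of_add_eq_zero_right h.symm

protected theorem sub_mul (u v z : N) : (u - v) * z = u * z - v * z := by
  rw [sub_eq_add_neg, sub_eq_add_neg, right_distrib, ZSNearRing.neg_mul]

theorem IsLeftStronglyRegular.isReduced (h : IsLeftStronglyRegular N) : IsReduced N := by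
  intro b hb
  obtain ⟨x, hx⟩ := h b
  rw [hx, hb, mul_zero]

theorem IsReduced.mul_eq_zero_swap (h : IsReduced N) {a d : N} (hda : d * a = 0) :
    a * d = 0 :=
  h _ <| by rw [mul_assoc, ← mul_assoc d, ← mul_assoc a, hda, mul_zero, ZSNearRing.zero_mul]

theorem IsReduced.mul_mul_eq_self_of_eq_mul_mul_self (h : IsReduced N) {a x : N}
    (hx : a = x * (a * a)) : a * x * a = a := by
  set d := a * x * a - a
  have hda : d * a = 0 := by
    rw [ZSNearRing.sub_mul, mul_assoc (a * x), mul_assoc a x, ← hx, sub_self]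
  have had : a * d = 0 := h.mul_eq_zero_swap hda
  have hdd : d * d = 0 := by
    rw [ZSNearRing.sub_mul, mul_assoc (a * x), had, mul_zero, sub_self]
  exact sub_eq_zero.mp (h d hdd)

end ZSNearRing

theorem stmt5 {N : Type*} [ZSNearRing N]
    (hsr : ∀ b : N, ∃ x : N, b = x * (b * b)) (a : N) :
    (∃ y : N, a * a = a * a * y * (a * a)) ∧
    (∀ x : N, a = x * (a * a) → a * a = a * a * (x * x) * (a * a)) := by
  have hred : ZSNearRing.IsReduced N := IsLeftStronglyRegular.isReduced hsr
  have hsq : ∀ x : N, a = x * (a * a) → a * a = a * a * (x * x) * (a * a) := by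
    intro x hx
    calc a * a = a * (a * x * a) := by rw [hred.mul_mul_eq_self_of_eq_mul_mul_self hx]
      _ = a * a * (x * x) * (a * a) := by simp only [mul_assoc]; rw [← hx]
  obtain ⟨x, hx⟩ := hsr a
  exact ⟨⟨x * x, hsq x hx⟩, hsq⟩
end

section
/- Let N be a zero-symmetric unital right near-ring and let e ∈ N be an idempotent. The following are equivalent: (1) e is left morphic; (2) N·e = (0:ₗ (1−e)); (3) N·(1−e) = (0:ₗ e) and e·(1−e) = 0; (4) 1−e is idempotent and left morphic. -/
open ZSNearRing

section Aux

variable {N : Type*} [ZSNearRing N]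

private lemma rd (x y z : N) : (x + y) * z = x * z + y * z := ZSNearRing.right_distrib x y z

private lemma mz (x : N) : x * (0 : N) = 0 := ZSNearRing.mul_zero x

private lemma zm (x : N) : (0 : N) * x = 0 := by
  have h := rd (0 : N) 0 x
  rw [add_zero] at h
  exact (left_eq_add.mp h)

private lemma nm (x y : N) : (-x) * y = -(x * y) := by
  have h : x * y + (-x) * y = 0 := by rw [← rd, add_neg_cancel, zm]
  exact (neg_eq_of_add_eq_zero_right h).symm

private lemma sm (x y z : N) : (x - y) * z = x * z - y * z := by
  rw [sub_eq_add_neg, rd, nm, ← sub_eq_add_neg]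

private lemma mem_NSet {a x : N} : x ∈ NSet a ↔ ∃ n : N, x = n * a := Iff.rfl

private lemma mem_lAnn {a x : N} : x ∈ lAnn a ↔ x * a = 0 := Iff.rfl

private lemma self_mem_NSet (a : N) : a ∈ NSet a := ⟨1, (one_mul a).symm⟩

private lemma mem_NSet_idem {e x : N} (hid : e * e = e) : x ∈ NSet e ↔ x * e = x := by
  constructor
  · rintro ⟨n, rfl⟩; rw [mul_assoc, hid]
  · intro h; exact ⟨x, h.symm⟩

/-- `(1-e)e = 0` for idempotent `e`. -/
private lemma fe_zero {e : N} (hid : e * e = e) : (1 - e) * e = 0 := by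
  rw [sm, one_mul, hid, sub_self]

/-- `(1-e)(1-e) = (1-e) - e(1-e)`. -/
private lemma ff_eq {e : N} : (1 - e) * (1 - e) = (1 - e) - e * (1 - e) := by
  rw [sm, one_mul]

/-- If `e` is an idempotent left morphic element, then `Ne = lAnn (1-e)`. -/
private lemma key {e : N} (hid : e * e = e) (h : IsLeftMorphic e) :
    NSet e = lAnn (1 - e) := by
  obtain ⟨b, h1, h2⟩ := h
  have eb0 : e * b = 0 := by
    have := self_mem_NSet e; rw [h1] at this; exact this
  have fb : (1 - e) * b = b := by rw [sm, one_mul, eb0, sub_zero]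
  -- u := e*(1-e); u*b = 0 so u ∈ lAnn b = Ne, hence u*e = u; but u*e = 0.
  have u0 : e * (1 - e) = 0 := by
    have ub : (e * (1 - e)) * b = 0 := by rw [mul_assoc, fb, eb0]
    have umem : e * (1 - e) ∈ NSet e := by rw [h1]; exact ub
    have := (mem_NSet_idem hid).mp umem
    rw [mul_assoc, fe_zero hid, mz] at this
    exact this.symm
  ext x
  constructor
  · rintro ⟨n, rfl⟩
    show (n * e) * (1 - e) = 0
    rw [mul_assoc, u0, mz]
  · intro hx
    have hx' : x * (1 - e) = 0 := hx
    have : x * b = 0 := by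
      rw [← fb, ← mul_assoc, hx', zm]
    rw [h1]; exact this

/-- (2) → (3) core: from `Ne = lAnn (1-e)` get `N(1-e) = lAnn e` and `e(1-e)=0`. -/
private lemma two_to_three {e : N} (hid : e * e = e) (h2 : NSet e = lAnn (1 - e)) :
    NSet (1 - e) = lAnn e ∧ e * (1 - e) = 0 := by
  have ef0 : e * (1 - e) = 0 := by
    have := self_mem_NSet e; rw [h2] at this; exact this
  have ff : (1 - e) * (1 - e) = 1 - e := by rw [ff_eq, ef0, sub_zero]
  refine ⟨?_, ef0⟩
  ext x
  constructor
  · rintro ⟨n, rfl⟩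
    show (n * (1 - e)) * e = 0
    rw [mul_assoc, fe_zero hid, mz]
  · intro hx
    have hx' : x * e = 0 := hx
    set y := x - x * (1 - e) with hy
    have yf : y * (1 - e) = 0 := by
      rw [hy, sm, mul_assoc, ff, sub_self]
    have ymem : y ∈ NSet e := by rw [h2]; exact yf
    have ye : y * e = y := (mem_NSet_idem hid).mp ymem
    have ye0 : y * e = 0 := by
      rw [hy, sm, hx', mul_assoc, fe_zero hid, mz, sub_self]
    have y0 : y = 0 := by rw [← ye, ye0]
    have : x = x * (1 - e) := sub_eq_zero.mp y0
    exact ⟨x, this⟩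

/-- (3) → (2) core: from `N(1-e) = lAnn e` and `e(1-e)=0` get `Ne = lAnn (1-e)`. -/
private lemma three_to_two {e : N} (hid : e * e = e)
    (h3 : NSet (1 - e) = lAnn e) (ef0 : e * (1 - e) = 0) :
    NSet e = lAnn (1 - e) := by
  have ff : (1 - e) * (1 - e) = 1 - e := by rw [ff_eq, ef0, sub_zero]
  ext x
  constructor
  · rintro ⟨n, rfl⟩
    show (n * e) * (1 - e) = 0
    rw [mul_assoc, ef0, mz]
  · intro hx
    have hx' : x * (1 - e) = 0 := hx
    set y := x - x * e with hy
    have ye : y * e = 0 := by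
      rw [hy, sm, mul_assoc, hid, sub_self]
    have ymem : y ∈ NSet (1 - e) := by rw [h3]; exact ye
    have yf : y * (1 - e) = y := (mem_NSet_idem ff).mp ymem
    have yf0 : y * (1 - e) = 0 := by
      rw [hy, sm, hx', mul_assoc, ef0, mz, sub_self]
    have y0 : y = 0 := by rw [← yf, yf0]
    have : x = x * e := sub_eq_zero.mp y0
    exact ⟨x, this⟩

end Aux

theorem stmt9 {N : Type*} [ZSNearRing N] (e : N) (hid : e * e = e) :
    List.TFAE [
      IsLeftMorphic e,
      NSet e = lAnn (1 - e),
      NSet (1 - e) = lAnn e ∧ e * (1 - e) = 0,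
      (1 - e) * (1 - e) = 1 - e ∧ IsLeftMorphic (1 - e)] := by
  tfae_have 1 → 2 := fun h => key hid h
  tfae_have 2 → 3 := fun h => two_to_three hid h
  tfae_have 3 → 1 := fun ⟨h3, ef0⟩ => ⟨1 - e, three_to_two hid h3 ef0, h3⟩
  tfae_have 3 → 4 := by
    rintro ⟨h3, ef0⟩
    have ff : (1 - e) * (1 - e) = 1 - e := by rw [ff_eq, ef0, sub_zero]
    exact ⟨ff, ⟨e, h3, three_to_two hid h3 ef0⟩⟩
  tfae_have 4 → 3 := by
    rintro ⟨ff, hm⟩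
    have ef0 : e * (1 - e) = 0 := by
      have h := ff_eq (e := e)
      rw [ff] at h
      have := sub_eq_self.mp h.symm
      exact this
    refine ⟨?_, ef0⟩
    -- apply `key` to the idempotent `1 - e`
    have hNf : NSet (1 - e) = lAnn (1 - (1 - e)) := key ff hm
    -- show lAnn (1 - (1-e)) = lAnn e
    have e'e : (1 - (1 - e)) * e = e := by
      rw [sm, one_mul, fe_zero hid, sub_zero]
    have fe' : (1 - e) * (1 - (1 - e)) = 0 := by
      have : 1 - e ∈ NSet (1 - e) := self_mem_NSet _
      rw [hNf] at this; exact this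
    have ee' : e * (1 - (1 - e)) = 1 - (1 - e) := by
      have h := sm 1 e (1 - (1 - e))
      rw [one_mul, fe'] at h
      exact (sub_eq_zero.mp h.symm).symm
    rw [hNf]
    ext x
    constructor
    · intro hx
      have hx' : x * (1 - (1 - e)) = 0 := hx
      show x * e = 0
      rw [← e'e, ← mul_assoc, hx', zm]
    · intro hx
      have hx' : x * e = 0 := hx
      show x * (1 - (1 - e)) = 0
      rw [← ee', ← mul_assoc, hx', zm]
  tfae_finish
end

section
/- Let N be a zero-symmetric unital right near-ring. Then N is left strongly regular if and only if N is regular and left duo (every left ideal of N is an ideal). -/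
open ZSNearRing

/-- A left ideal of a right near-ring: a normal subgroup `L` of `(N,+)` with
`r·(l + m) - r·m ∈ L` for all `r, m ∈ N` and `l ∈ L`. -/
def IsLeftIdeal {N : Type*} [ZSNearRing N] (L : Set N) : Prop :=
  (0 : N) ∈ L ∧
  (∀ x ∈ L, ∀ y ∈ L, x + y ∈ L) ∧
  (∀ x ∈ L, -x ∈ L) ∧
  (∀ g : N, ∀ x ∈ L, g + x - g ∈ L) ∧
  (∀ r m : N, ∀ l ∈ L, r * (l + m) - r * m ∈ L)

section NRLemmas

variable {N : Type*} [ZSNearRing N]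

lemma nr_zero_mul (a : N) : (0 : N) * a = 0 := by
  have h : ((0 : N) + 0) * a = 0 * a + 0 * a := ZSNearRing.right_distrib 0 0 a
  rw [add_zero] at h
  have h' : (0 : N) * a + 0 = 0 * a + 0 * a := by rw [add_zero]; exact h
  exact (add_left_cancel h').symm

lemma nr_neg_mul (x a : N) : (-x) * a = -(x * a) := by
  have h : x * a + (-x) * a = 0 := by
    rw [← ZSNearRing.right_distrib]
    rw [add_neg_cancel, nr_zero_mul]
  exact (neg_eq_of_add_eq_zero_right h).symm

lemma nr_sub_mul (x y a : N) : (x - y) * a = x * a - y * a := by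
  rw [sub_eq_add_neg, ZSNearRing.right_distrib, nr_neg_mul, ← sub_eq_add_neg]

/-- Reversal of zero products, valid in any reduced zero-symmetric near-ring. -/
lemma nr_rev (hred : ∀ a : N, a * a = 0 → a = 0) (a b : N) (h : a * b = 0) :
    b * a = 0 := by
  apply hred
  calc b * a * (b * a) = b * (a * b) * a := by simp [mul_assoc]
    _ = 0 := by rw [h, ZSNearRing.mul_zero, nr_zero_mul]

/-- Insertion of factors property, valid in any reduced zero-symmetric near-ring. -/
lemma nr_ifp_of_red (hred : ∀ a : N, a * a = 0 → a = 0) (a b n : N)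
    (h : a * b = 0) : a * n * b = 0 := by
  have hba : b * a = 0 := nr_rev hred a b h
  apply hred
  have hrw : a * n * b * (a * n * b) = (a * n) * ((b * a) * (n * b)) := by
    simp [mul_assoc]
  rw [hrw, hba, nr_zero_mul, ZSNearRing.mul_zero]

/-- Insertion of factors property, from the left-duo condition. -/
lemma nr_ifp_of_duo
    (hduo : ∀ L : Set N, IsLeftIdeal L → ∀ l ∈ L, ∀ n : N, l * n ∈ L)
    (a b n : N) (h : a * b = 0) : a * n * b = 0 := by
  have hL : IsLeftIdeal {z : N | z * b = 0} := by
    refine ⟨nr_zero_mul b, ?_, ?_, ?_, ?_⟩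
    · intro x hx y hy
      have hx' : x * b = 0 := hx
      have hy' : y * b = 0 := hy
      show (x + y) * b = 0
      rw [ZSNearRing.right_distrib, hx', hy', add_zero]
    · intro x hx
      have hx' : x * b = 0 := hx
      show (-x) * b = 0
      rw [nr_neg_mul, hx', neg_zero]
    · intro g x hx
      have hx' : x * b = 0 := hx
      show (g + x - g) * b = 0
      rw [nr_sub_mul, ZSNearRing.right_distrib, hx', add_zero, sub_self]
    · intro r m l hl
      have hl' : l * b = 0 := hl
      show (r * (l + m) - r * m) * b = 0
      have h1 : (r * (l + m)) * b = (r * m) * b := by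
        rw [mul_assoc, mul_assoc, ZSNearRing.right_distrib, hl', zero_add]
      rw [nr_sub_mul, h1, sub_self]
  exact hduo _ hL a h n

/-- In a reduced z.s. near-ring with IFP, `e·m = e·m·e` for every idempotent `e`. -/
lemma nr_claimA (hred : ∀ a : N, a * a = 0 → a = 0)
    (hrev : ∀ a b : N, a * b = 0 → b * a = 0)
    (hifp : ∀ a b n : N, a * b = 0 → a * n * b = 0)
    (e : N) (he : e * e = e) (m : N) : e * m = e * m * e := by
  have hse : (e * m - e * m * e) * e = 0 := by
    rw [nr_sub_mul, mul_assoc (e * m) e e, he, sub_self]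
  have hes : e * (e * m - e * m * e) = 0 := hrev _ _ hse
  have h1 : e * m * (e * m - e * m * e) = 0 := hifp _ _ m hes
  have h2 : e * m * e * (e * m - e * m * e) = 0 := by
    have h' := hifp _ _ (m * e) hes
    rwa [← mul_assoc e m e] at h'
  have hss : (e * m - e * m * e) * (e * m - e * m * e) = 0 := by
    rw [nr_sub_mul, h1, h2, sub_self]
  exact sub_eq_zero.mp (hred _ hss)

/-- Left strong regularity gives regularity (with the same witness). -/
lemma nr_reg_of_lsr (hsr : ∀ a : N, ∃ x : N, a = x * (a * a)) :
    ∀ a : N, ∃ x : N, a = x * (a * a) ∧ a = a * x * a := by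
  have hred : ∀ a : N, a * a = 0 → a = 0 := by
    intro a h
    obtain ⟨x, hx⟩ := hsr a
    rw [hx, h, ZSNearRing.mul_zero]
  intro a
  obtain ⟨x, hx⟩ := hsr a
  refine ⟨x, hx, ?_⟩
  have hta : (a - a * x * a) * a = 0 := by
    have h1 : a * x * a * a = a * a := by
      rw [mul_assoc (a * x) a a, mul_assoc a x (a * a), ← hx]
    rw [nr_sub_mul, h1, sub_self]
  have hat : a * (a - a * x * a) = 0 := nr_rev hred _ _ hta
  have htt : (a - a * x * a) * (a - a * x * a) = 0 := by
    have h2 : (a * x * a) * (a - a * x * a) = 0 := by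
      rw [mul_assoc (a * x) a (a - a * x * a), hat, ZSNearRing.mul_zero]
    rw [nr_sub_mul, hat, h2, sub_self]
  exact sub_eq_zero.mp (hred _ htt)

end NRLemmas

theorem stmt13 {N : Type*} [ZSNearRing N] :
    (∀ a : N, ∃ x : N, a = x * (a * a)) ↔
      ((∀ a : N, ∃ x : N, a = a * x * a) ∧
        (∀ L : Set N, IsLeftIdeal L → ∀ l ∈ L, ∀ n : N, l * n ∈ L)) := by
  constructor
  · -- forward: left strongly regular ⟹ regular ∧ left duo
    intro hsr
    have hred : ∀ a : N, a * a = 0 → a = 0 := by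
      intro a h
      obtain ⟨x, hx⟩ := hsr a
      rw [hx, h, ZSNearRing.mul_zero]
    have hrev := nr_rev hred
    have hifp := nr_ifp_of_red hred
    constructor
    · intro a
      obtain ⟨x, _, h2⟩ := nr_reg_of_lsr hsr a
      exact ⟨x, h2⟩
    · intro L hL l hl n
      obtain ⟨h0, hadd, hneg, hconj, hkey⟩ := hL
      have habs : ∀ r : N, r * l ∈ L := by
        intro r
        have h' := hkey r 0 l hl
        rwa [add_zero, ZSNearRing.mul_zero, sub_zero] at h'
      obtain ⟨x, hx, hx2⟩ := nr_reg_of_lsr hsr l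
      -- hx : l = x*(l*l), hx2 : l = l*x*l
      have hff : (x * l) * (x * l) = x * l := by
        calc (x * l) * (x * l) = x * (l * x * l) := by simp [mul_assoc]
          _ = x * l := by rw [← hx2]
      have hA := nr_claimA hred hrev hifp (x * l) hff (l * n)
      -- hA : (x*l)*(l*n) = (x*l)*(l*n)*(x*l)
      have hfl : (x * l) * (l * n) = l * n := by
        calc (x * l) * (l * n) = (x * (l * l)) * n := by simp [mul_assoc]
          _ = l * n := by rw [← hx]
      have hrw : l * n = ((l * n) * x) * l := by
        calc l * n = (x * l) * (l * n) := hfl.symm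
          _ = (x * l) * (l * n) * (x * l) := hA
          _ = (l * n) * (x * l) := by rw [hfl]
          _ = ((l * n) * x) * l := (mul_assoc _ _ _).symm
      rw [hrw]
      exact habs _
  · -- converse: regular ∧ left duo ⟹ left strongly regular
    rintro ⟨hreg, hduo⟩
    have hifp := nr_ifp_of_duo hduo
    have hred : ∀ a : N, a * a = 0 → a = 0 := by
      intro a h
      obtain ⟨x, hx⟩ := hreg a
      have h1 : (x * a) * a = 0 := by rw [mul_assoc, h, ZSNearRing.mul_zero]
      have h2 : (x * a) * x * a = 0 := hifp (x * a) a x h1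
      have h3 : a * (x * a * x * a) = a := by
        calc a * (x * a * x * a) = ((a * x * a) * x) * a := by simp [mul_assoc]
          _ = a := by rw [← hx, ← hx]
      calc a = a * (x * a * x * a) := h3.symm
        _ = 0 := by rw [h2, ZSNearRing.mul_zero]
    have hrev := nr_rev hred
    intro a
    obtain ⟨x, hx⟩ := hreg a
    -- hx : a = a*x*a
    have he : (a * x) * (a * x) = a * x := by
      calc (a * x) * (a * x) = (a * x * a) * x := by simp [mul_assoc]
        _ = a * x := by rw [← hx]
    have step1 : ((1 - x * a) * x) * a = 0 := by
      have hfix : (x * a) * (x * a) = x * a := by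
        calc (x * a) * (x * a) = x * (a * x * a) := by simp [mul_assoc]
          _ = x * a := by rw [← hx]
      have h' : ((1 - x * a) * x) * a = (1 - x * a) * (x * a) := mul_assoc _ _ _
      rw [h', nr_sub_mul, one_mul, hfix, sub_self]
    have step2 : (a * (1 - x * a)) * x = 0 := by
      have h' := hrev _ _ step1
      rwa [← mul_assoc] at h'
    have step3 : ((a * (1 - x * a)) * a) * x = 0 := hifp (a * (1 - x * a)) x a step2
    have hA := nr_claimA hred hrev hifp (a * x) he (a * (1 - x * a))
    have hea : (a * x) * (a * (1 - x * a)) = a * (1 - x * a) := by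
      calc (a * x) * (a * (1 - x * a)) = (a * x * a) * (1 - x * a) := by
            simp [mul_assoc]
        _ = a * (1 - x * a) := by rw [← hx]
    have hau : a * (1 - x * a) = 0 := by
      calc a * (1 - x * a) = (a * x) * (a * (1 - x * a)) := hea.symm
        _ = (a * x) * (a * (1 - x * a)) * (a * x) := hA
        _ = (a * (1 - x * a)) * (a * x) := by rw [hea]
        _ = ((a * (1 - x * a)) * a) * x := (mul_assoc _ _ _).symm
        _ = 0 := step3
    have hua : (1 - x * a) * a = 0 := hrev _ _ hau
    rw [nr_sub_mul, one_mul, mul_assoc] at hua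
    exact ⟨x, sub_eq_zero.mp hua⟩
end
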